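/- Let (X, Y) be a 3-separation of a 3-connected binary matroid with |X| = 4. Then X is a quad or a 4-fan. -/

import Mathlib

open scoped Matroid

universe u v

namespace Matroid

variable {α : Type u} {β : Type v}

/-- Deletion of a set of elements from a matroid. -/
def Del (M : Matroid α) (D : Set α) : Matroid α := M ↾ (M.E \ D)

/-- Contraction of a set of elements in a matroid. -/
def Con (M : Matroid α) (C : Set α) : Matroid α := (M✶.Del C)✶

/-- A circuit is a minimal dependent set. -/
def IsCircuit' (M : Matroid α) (C : Set α) : Prop :=
  M.Dep C ∧ ∀ ⦃D : Set α⦄, D ⊂ C → M.Indep D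

/-- A cocircuit is a circuit of the dual matroid. -/
def IsCocircuit' (M : Matroid α) (C : Set α) : Prop := M✶.IsCircuit' C

/-- A triangle is a 3-element circuit. -/
def IsTriangle (M : Matroid α) (T : Set α) : Prop := M.IsCircuit' T ∧ T.encard = 3

/-- A triad is a 3-element cocircuit. -/
def IsTriad (M : Matroid α) (T : Set α) : Prop := M.IsCocircuit' T ∧ T.encard = 3

/-- A quad is a 4-element set that is both a circuit and a cocircuit. -/
def IsQuad (M : Matroid α) (Q : Set α) : Prop :=
  M.IsCircuit' Q ∧ M.IsCocircuit' Q ∧ Q.encard = 4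

/-- The rank (in `ℕ∞`) of a set in a matroid: the supremum of the cardinalities
of independent subsets of the set. -/
noncomputable def eRk' (M : Matroid α) (X : Set α) : ℕ∞ :=
  ⨆ I ∈ {I : Set α | M.Indep I ∧ I ⊆ X}, I.encard

/-- `M.ConnBddBy X k` says that the connectivity `λ_M(X) = r(X) + r(E − X) − r(M)`
is at most `k`, phrased without subtraction. -/
def ConnBddBy (M : Matroid α) (X : Set α) (k : ℕ) : Prop :=
  M.eRk' X + M.eRk' (M.E \ X) ≤ M.eRk' M.E + (k : ℕ∞)

/-- `(X, Y)` is a `k`-separation of `M`: a partition of the ground set with both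
sides of size at least `k` and `λ_M(X) ≤ k − 1`. -/
def IsKSep (M : Matroid α) (k : ℕ) (X Y : Set α) : Prop :=
  Disjoint X Y ∧ X ∪ Y = M.E ∧ (k : ℕ∞) ≤ X.encard ∧ (k : ℕ∞) ≤ Y.encard ∧
    M.ConnBddBy X (k - 1)

/-- A matroid is `n`-connected if it has no `k`-separation for any `k < n`. -/
def NConnected (M : Matroid α) (n : ℕ) : Prop :=
  ∀ k : ℕ, 0 < k → k < n → ∀ X Y : Set α, ¬ M.IsKSep k X Y

/-- A matroid is 3-connected if it has no 1- or 2-separation. -/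
def ThreeConnected (M : Matroid α) : Prop := M.NConnected 3

/-- A matroid is 4-connected if it has no 1-, 2- or 3-separation. -/
def FourConnected (M : Matroid α) : Prop := M.NConnected 4

/-- A matroid is `(4, k)`-connected if it is 3-connected and every 3-separation
has a side with at most `k` elements. -/
def FourKConnected (M : Matroid α) (k : ℕ) : Prop :=
  M.ThreeConnected ∧ ∀ X Y : Set α, M.IsKSep 3 X Y →
    X.encard ≤ (k : ℕ∞) ∨ Y.encard ≤ (k : ℕ∞)

/-- A matroid is internally 4-connected if it is (4, 3)-connected. -/
def InternallyFourConnected (M : Matroid α) : Prop := M.FourKConnected 3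

/-- A `(4, 3)`-violator is a 3-separation with both sides of size at least 4. -/
def Violator43 (M : Matroid α) (X Y : Set α) : Prop :=
  M.IsKSep 3 X Y ∧ (4 : ℕ∞) ≤ X.encard ∧ (4 : ℕ∞) ≤ Y.encard

/-- Two matroids are isomorphic if there is a bijection between their ground sets
carrying independent sets to independent sets in both directions. -/
def IsIsoTo (M : Matroid α) (N : Matroid β) : Prop :=
  ∃ e : M.E ≃ N.E, ∀ I : Set M.E,
    M.Indep (Subtype.val '' I) ↔ N.Indep (Subtype.val '' (e '' I))

/-- `N` is a minor of `M` if it is obtained from `M` by contracting a set and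
deleting a disjoint set. -/
def IsMinorOf (N M : Matroid α) : Prop :=
  ∃ C D : Set α, Disjoint C D ∧ C ⊆ M.E ∧ D ⊆ M.E ∧ N = (M.Con C).Del D

/-- `M` has an `N`-minor: a minor of `M` isomorphic to `N`. -/
def HasIsoMinor (M : Matroid α) (N : Matroid β) : Prop :=
  ∃ M₀ : Matroid α, M₀.IsMinorOf M ∧ M₀.IsIsoTo N

/-- `M` has a proper `N`-minor: a proper minor of `M` isomorphic to `N`. -/
def HasProperIsoMinor (M : Matroid α) (N : Matroid β) : Prop :=
  ∃ M₀ : Matroid α, M₀.IsMinorOf M ∧ M₀ ≠ M ∧ M₀.IsIsoTo N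

/-- A matroid is binary if it is representable over `GF(2)`. -/
def IsBinary (M : Matroid α) : Prop :=
  ∃ (ι : Type u) (v : α → ι → ZMod 2), ∀ I : Set α,
    M.Indep I ↔ I ⊆ M.E ∧ LinearIndependent (ZMod 2) (fun x : I => v x)

/-- A 4-fan: an ordering `(a, b, c, d)` of a 4-element set with `{a,b,c}` a
triangle and `{b,c,d}` a triad. -/
def Is4FanOrdering (M : Matroid α) (a b c d : α) : Prop :=
  ({a, b, c, d} : Set α).encard = 4 ∧
    M.IsTriangle {a, b, c} ∧ M.IsTriad {b, c, d}

/-- A 5-fan: an ordering of a 5-element set whose alternating sequence contains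
two triangles. -/
def Is5FanOrdering (M : Matroid α) (a b c d e : α) : Prop :=
  ({a, b, c, d, e} : Set α).encard = 5 ∧
    M.IsTriangle {a, b, c} ∧ M.IsTriad {b, c, d} ∧ M.IsTriangle {c, d, e}

/-- A 5-cofan: an ordering of a 5-element set whose alternating sequence contains
two triads. -/
def Is5CofanOrdering (M : Matroid α) (a b c d e : α) : Prop :=
  ({a, b, c, d, e} : Set α).encard = 5 ∧
    M.IsTriad {a, b, c} ∧ M.IsTriangle {b, c, d} ∧ M.IsTriad {c, d, e}

/-- A fan ordering `(s 0, …, s (n-1))`: the consecutive triples form an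
alternating sequence of triangles and triads. -/
def IsFanOrdering (M : Matroid α) (n : ℕ) (s : ℕ → α) : Prop :=
  3 ≤ n ∧ Set.InjOn s (Set.Iio n) ∧
    ((∀ i : ℕ, i + 3 ≤ n →
        (Even i → M.IsTriangle {s i, s (i + 1), s (i + 2)}) ∧
        (¬ Even i → M.IsTriad {s i, s (i + 1), s (i + 2)})) ∨
     (∀ i : ℕ, i + 3 ≤ n →
        (Even i → M.IsTriad {s i, s (i + 1), s (i + 2)}) ∧
        (¬ Even i → M.IsTriangle {s i, s (i + 1), s (i + 2)})))

/-- The counterexample hypotheses on a pair `(M, N)`. -/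
def CexHyp (M : Matroid α) (N : Matroid β) : Prop :=
  M.IsBinary ∧ N.IsBinary ∧
  M.InternallyFourConnected ∧ N.InternallyFourConnected ∧
  M.HasProperIsoMinor N ∧
  (8 : ℕ∞) ≤ N.E.encard ∧ (11 : ℕ∞) ≤ M.E.encard ∧
  (∀ T : Set α, M.IsTriangle T → ∀ e ∈ T, ¬ (M.Del {e}).HasIsoMinor N) ∧
  (∀ T : Set α, M.IsTriad T → ∀ e ∈ T, ¬ (M.Con {e}).HasIsoMinor N) ∧
  ¬ ∃ M' : Matroid α, M'.IsMinorOf M ∧ M'.InternallyFourConnected ∧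
      M'.HasIsoMinor N ∧
      M'.E.encard + 1 ≤ M.E.encard ∧ M.E.encard ≤ M'.E.encard + 2

end Matroid

open Matroid

/-!
Write `r` and `r*` for the rank functions of `M` and `M✶`. Since `λ(X) = r(X) + r*(X) - |X|`,
3-connectivity and `λ(X) ≤ 2` give `r(X) + r*(X) = 6`, and 3-connectivity also forbids circuits
and cocircuits of size at most two inside `X`. In a binary matroid every circuit meets every
cocircuit in an even number of elements. If `r(X) ≤ 2`, every 3-subset of `X` is a triangle, and
a cocircuit through an element of `X` meets one of these triangles in an odd number of elements;
dually `r*(X) ≤ 2` is impossible. Hence `r(X) = r*(X) = 3`, so `X` contains a circuit and a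
cocircuit, each of size 3 or 4, and the parity of their intersection forces either both to be `X`
(a quad) or two triples sharing two elements (a 4-fan).
-/

namespace Set

variable {α : Type u} {C S X : Set α} {a d : α}

theorem exists_odd_ncard_sdiff_singleton (hX : X.Finite) (hXe : Even X.ncard) (hSX : S ⊆ X)
    (hS : S.Nonempty) : ∃ y ∈ X, Odd (S \ {y}).ncard := by
  by_cases hSe : Even S.ncard
  · obtain ⟨y, hy⟩ := hS
    refine ⟨y, hSX hy, ?_⟩
    rw [ncard_sdiff_singleton_of_mem hy]
    exact Nat.Even.sub_odd ((ncard_pos (hX.subset hSX)).2 ⟨y, hy⟩) hSe odd_one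
  · obtain ⟨y, hyX, hyS⟩ := exists_of_ssubset (hSX.ssubset_of_ne (by rintro rfl; exact hSe hXe))
    exact ⟨y, hyX, by rwa [sdiff_singleton_eq_self hyS, ← Nat.not_even_iff_odd]⟩

theorem eq_or_exists_eq_sdiff_singleton (hX : X.Finite) (hCX : C ⊆ X)
    (hC : X.ncard ≤ C.ncard + 1) : C = X ∨ ∃ d ∈ X, C = X \ {d} := by
  refine or_iff_not_imp_left.2 fun hne ↦ ?_
  obtain ⟨d, hdX, hdC⟩ := exists_of_ssubset (hCX.ssubset_of_ne hne)
  refine ⟨d, hdX, eq_of_subset_of_ncard_le (subset_sdiff_singleton hCX hdC) ?_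
    (hX.subset sdiff_subset)⟩
  rw [ncard_sdiff_singleton_of_mem hdX]
  omega

theorem exists_eq_of_ncard_eq_four (hX : X.ncard = 4) (ha : a ∈ X) (hd : d ∈ X) (had : a ≠ d) :
    ∃ b c, X = {a, b, c, d} ∧ X \ {d} = {a, b, c} ∧ X \ {a} = {b, c, d} := by
  obtain ⟨b, c, hbc, hXbc⟩ : ∃ b c, b ≠ c ∧ X \ {a, d} = {b, c} := by
    rw [← ncard_eq_two, ncard_sdiff (pair_subset ha hd), hX, ncard_pair had]
  simp only [Set.ext_iff, mem_sdiff, mem_insert_iff, mem_singleton_iff] at hXbc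
  refine ⟨b, c, ?_, ?_, ?_⟩ <;> ext x <;> grind

end Set

namespace Matroid

open Set Submodule

variable {α : Type u} {M : Matroid α} {C K X Y Z : Set α} {e : α} {k : ℕ}

lemma eRk'_eq_eRk (M : Matroid α) (X : Set α) : M.eRk' X = M.eRk X := by
  refine le_antisymm (iSup₂_le fun I hI ↦ hI.1.encard_le_eRk_of_subset hI.2) ?_
  obtain ⟨I, hI⟩ := M.exists_isBasis' X
  rw [← hI.encard_eq_eRk]
  exact le_iSup₂_of_le I ⟨hI.indep, hI.subset⟩ le_rfl

lemma isCircuit'_iff : M.IsCircuit' C ↔ M.IsCircuit C := isCircuit_iff_forall_ssubset.symm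

lemma isCocircuit'_iff : M.IsCocircuit' K ↔ M.IsCocircuit K := isCircuit'_iff

lemma exists_isCircuit_subset_of_eRk_lt (hX : X ⊆ M.E) (h : M.eRk X < X.encard) :
    ∃ C ⊆ X, M.IsCircuit C :=
  ((not_indep_iff hX).1 fun hI ↦ h.ne hI.eRk_eq_encard).exists_isCircuit_subset

lemma IsCocircuit.spanning_insert_compl (hK : M.IsCocircuit K) (he : e ∈ K) :
    M.Spanning (insert e (M.E \ K)) := by
  have hKE := hK.subset_ground
  rw [isCocircuit_iff_minimal_compl_nonspanning, minimal_iff_forall_ssubset] at hK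
  convert not_not.1 (hK.2 (sdiff_singleton_ssubset.2 he)) using 1
  ext x
  have := @hKE x
  by_cases hx : x = e <;> simp_all

lemma IsCocircuit.notMem_closure_compl (hK : M.IsCocircuit K) (he : e ∈ K) :
    e ∉ M.closure (M.E \ K) := by
  intro hcl
  have hsp := hK.spanning_insert_compl he
  refine (isCocircuit_iff_minimal_compl_nonspanning.1 hK).1 ?_
  rw [spanning_iff_closure_eq] at hsp ⊢
  rwa [closure_insert_eq_of_mem_closure hcl] at hsp

section Connectivity

lemma connBddBy_iff_eRk : M.ConnBddBy X k ↔ M.eRk X + M.eRk (M.E \ X) ≤ M.eRank + k := by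
  rw [ConnBddBy, eRk'_eq_eRk, eRk'_eq_eRk, eRk'_eq_eRk, eRk_ground]

lemma eRank_ne_top_of_not_connBddBy (h : ¬ M.ConnBddBy X k) : M.eRank ≠ ⊤ := fun hr ↦
  h (connBddBy_iff_eRk.2 (by simp [hr]))

lemma connBddBy_iff (hX : X ⊆ M.E) (hXfin : X.Finite) (hr : M.eRank ≠ ⊤) :
    M.ConnBddBy X k ↔ M.eRk X + M✶.eRk X ≤ X.encard + k := by
  rw [connBddBy_iff_eRk, ← ENat.add_le_add_iff_right hXfin.encard_lt_top.ne, add_assoc,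
    ← M.eRk_dual_add_eRank X hX, ← add_assoc,
    show M.eRank + k + X.encard = X.encard + k + M.eRank by ring, ENat.add_le_add_iff_right hr]

lemma IsKSep.subset_ground (h : M.IsKSep k X Y) : X ⊆ M.E := h.2.1 ▸ subset_union_left

lemma IsKSep.sdiff_eq (h : M.IsKSep k X Y) : M.E \ X = Y := by
  rw [← h.2.1, union_sdiff_cancel_left h.1.inter_eq.subset]

lemma ThreeConnected.not_connBddBy (hM : M.ThreeConnected) (hZ : Z ⊆ M.E) (hk0 : 0 < k)
    (hk3 : k < 3) (hkZ : (k : ℕ∞) ≤ Z.encard) (hkZc : (k : ℕ∞) ≤ (M.E \ Z).encard) :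
    ¬ M.ConnBddBy Z (k - 1) := fun h ↦
  hM k hk0 hk3 Z (M.E \ Z) ⟨disjoint_sdiff_right, union_sdiff_cancel hZ, hkZ, hkZc, h⟩

lemma ThreeConnected.encard_add_le (hM : M.ThreeConnected) (hZ : Z ⊆ M.E) (hZfin : Z.Finite)
    (hk0 : 0 < k) (hk3 : k < 3) (hkZ : (k : ℕ∞) ≤ Z.encard)
    (hkZc : (k : ℕ∞) ≤ (M.E \ Z).encard) : Z.encard + k ≤ M.eRk Z + M✶.eRk Z := by
  have hnot := hM.not_connBddBy hZ hk0 hk3 hkZ hkZc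
  rw [connBddBy_iff hZ hZfin (eRank_ne_top_of_not_connBddBy hnot), not_le] at hnot
  have hk : ((k - 1 : ℕ) : ℕ∞) + 1 = k := by norm_cast; omega
  simpa only [add_assoc, hk] using Order.add_one_le_of_lt hnot

lemma ThreeConnected.eRk_add_eRk_dual_eq (hM : M.ThreeConnected) (hsep : M.IsKSep 3 X Y)
    (hXfin : X.Finite) : M.eRk X + M✶.eRk X = X.encard + 2 := by
  have hXE := hsep.subset_ground
  have h2X : ((2 : ℕ) : ℕ∞) ≤ X.encard := le_trans (by norm_num) hsep.2.2.1
  have h2Y : ((2 : ℕ) : ℕ∞) ≤ (M.E \ X).encard :=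
    hsep.sdiff_eq ▸ le_trans (by norm_num) hsep.2.2.2.1
  have hr := eRank_ne_top_of_not_connBddBy (hM.not_connBddBy hXE two_pos (by norm_num) h2X h2Y)
  exact le_antisymm ((connBddBy_iff hXE hXfin hr).1 hsep.2.2.2.2)
    (hM.encard_add_le hXE hXfin two_pos (by norm_num) h2X h2Y)

lemma ThreeConnected.three_le_ncard (hM : M.ThreeConnected) (hsep : M.IsKSep 3 X Y)
    (hZX : Z ⊆ X) (hZfin : Z.Finite) (hZ : M.eRk Z + M✶.eRk Z < Z.encard + Z.encard) :
    3 ≤ Z.ncard := by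
  by_contra! h3
  rw [← hZfin.cast_ncard_eq] at hZ
  have hZ0 : 0 < Z.ncard := by
    by_contra! h0
    simp [show Z.ncard = 0 by omega] at hZ
  have hY : Y ⊆ M.E \ Z := hsep.sdiff_eq ▸ sdiff_subset_sdiff_right hZX
  have hZc : (Z.ncard : ℕ∞) ≤ (M.E \ Z).encard :=
    le_trans (by norm_cast; omega) (hsep.2.2.2.1.trans (encard_mono hY))
  refine (hM.encard_add_le (hZX.trans hsep.subset_ground) hZfin hZ0 h3
    hZfin.cast_ncard_eq.le hZc).not_gt ?_
  rwa [← hZfin.cast_ncard_eq]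

lemma ThreeConnected.three_le_ncard_of_isCircuit (hM : M.ThreeConnected)
    (hsep : M.IsKSep 3 X Y) (hCX : C ⊆ X) (hCfin : C.Finite) (hC : M.IsCircuit C) :
    3 ≤ C.ncard :=
  hM.three_le_ncard hsep hCX hCfin <| ENat.add_lt_add_of_lt_of_le
    ((M✶.eRk_le_encard C).trans_lt hCfin.encard_lt_top).ne
    (M.eRk_lt_encard_of_dep_of_finite hCfin hC.dep) (M✶.eRk_le_encard C)

lemma ThreeConnected.three_le_ncard_of_isCocircuit (hM : M.ThreeConnected)
    (hsep : M.IsKSep 3 X Y) (hKX : K ⊆ X) (hKfin : K.Finite) (hK : M.IsCocircuit K) :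
    3 ≤ K.ncard :=
  hM.three_le_ncard hsep hKX hKfin <| add_comm (M✶.eRk K) _ ▸ ENat.add_lt_add_of_lt_of_le
    ((M.eRk_le_encard K).trans_lt hKfin.encard_lt_top).ne
    (M✶.eRk_lt_encard_of_dep_of_finite hKfin hK.dep) (M.eRk_le_encard K)

end Connectivity

section Representation

def IsRep {W : Type*} [AddCommGroup W] (M : Matroid α) (𝔽 : Type*) [Field 𝔽] [Module 𝔽 W]
    (v : α → W) : Prop :=
  ∀ I, M.Indep I ↔ I ⊆ M.E ∧ LinearIndepOn 𝔽 v I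

variable {𝔽 W : Type*} [Field 𝔽] [AddCommGroup W] [Module 𝔽 W] {v : α → W} {I : Set α}

lemma IsRep.mem_closure_iff_of_indep (hv : M.IsRep 𝔽 v) (hI : M.Indep I) (he : e ∈ M.E) :
    e ∈ M.closure I ↔ v e ∈ span 𝔽 (v '' I) := by
  obtain ⟨hIE, hIli⟩ := (hv I).1 hI
  rw [hI.mem_closure_iff', hv, insert_subset_iff, linearIndepOn_insert_iff]
  by_cases heI : e ∈ I
  · simpa [heI, he] using subset_span (mem_image_of_mem v heI)
  · simp [he, heI, hIE, hIli]

lemma IsRep.mem_closure_iff (hv : M.IsRep 𝔽 v) (hX : X ⊆ M.E) (he : e ∈ M.E) :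
    e ∈ M.closure X ↔ v e ∈ span 𝔽 (v '' X) := by
  obtain ⟨I, hI⟩ := M.exists_isBasis X
  have hspan : span 𝔽 (v '' I) = span 𝔽 (v '' X) := by
    refine le_antisymm (span_mono (image_mono hI.subset)) (span_le.2 ?_)
    rintro _ ⟨x, hx, rfl⟩
    exact (hv.mem_closure_iff_of_indep hI.indep (hX hx)).1 (hI.subset_closure hx)
  rw [← hI.closure_eq_closure, hv.mem_closure_iff_of_indep hI.indep he, hspan]

lemma IsRep.exists_linearCombination_eq_zero_of_isCircuit (hv : M.IsRep 𝔽 v)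
    (hC : M.IsCircuit C) :
    ∃ l : α →₀ 𝔽, (l.support : Set α) = C ∧ Finsupp.linearCombination 𝔽 v l = 0 := by
  have hdep : ¬ LinearIndepOn 𝔽 v C := fun h ↦ hC.dep.not_indep ((hv C).2 ⟨hC.subset_ground, h⟩)
  obtain ⟨l, hl, hl0, hlne⟩ := linearDepOn_iff'.1 hdep
  refine ⟨l, ((Finsupp.mem_supported _ _).1 hl).eq_of_not_ssubset fun hss ↦ hlne ?_, hl0⟩
  exact linearIndepOn_iff.1 ((hv _).1 (hC.ssubset_indep hss)).2 l
    (Finsupp.mem_supported_support _ _) hl0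

/-- The complement of a cocircuit is a hyperplane, so it is cut out by a linear functional. -/
lemma IsRep.exists_linearMap_of_isCocircuit (hv : M.IsRep 𝔽 v) (hK : M.IsCocircuit K) :
    ∃ f : W →ₗ[𝔽] 𝔽, (∀ e ∈ M.E \ K, f (v e) = 0) ∧ ∀ e ∈ K, f (v e) ≠ 0 := by
  have hKE := hK.subset_ground
  obtain ⟨e₀, he₀⟩ := hK.nonempty
  obtain ⟨f, hf₀, hker⟩ := exists_le_ker_of_notMem
    (mt (hv.mem_closure_iff sdiff_subset (hKE he₀)).2 (hK.notMem_closure_compl he₀))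
  have hH : ∀ e ∈ M.E \ K, f (v e) = 0 := fun e he ↦ hker (subset_span (mem_image_of_mem v he))
  refine ⟨f, hH, fun e he hfe ↦ hf₀ ?_⟩
  have hspan : span 𝔽 (v '' insert e (M.E \ K)) ≤ LinearMap.ker f := by
    refine span_le.2 ?_
    rintro _ ⟨x, rfl | hx, rfl⟩
    exacts [hfe, hH x hx]
  refine hspan <| (hv.mem_closure_iff (insert_subset (hKE he) sdiff_subset) (hKE he₀)).1 ?_
  rw [(hK.spanning_insert_compl he).closure_eq]
  exact hKE he₀

end Representation

/-- Over `GF(2)` the vectors of a circuit sum to zero, and a cocircuit is the support of a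
functional; applying it to that sum counts `C ∩ K` modulo 2. -/
lemma IsRep.even_ncard_inter {W : Type*} [AddCommGroup W] [Module (ZMod 2) W] {v : α → W}
    (hv : M.IsRep (ZMod 2) v) (hC : M.IsCircuit C) (hK : M.IsCocircuit K) :
    Even (C ∩ K).ncard := by
  classical
  have h01 : ∀ x : ZMod 2, x ≠ 0 → x = 1 := by decide
  obtain ⟨l, hlC, hl0⟩ := hv.exists_linearCombination_eq_zero_of_isCircuit hC
  obtain ⟨f, hfH, hfK⟩ := hv.exists_linearMap_of_isCocircuit hK
  have hterm : ∀ e ∈ l.support, l e • f (v e) = if e ∈ K then 1 else 0 := by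
    intro e he
    rw [h01 _ (Finsupp.mem_support_iff.1 he), one_smul]
    split_ifs with heK
    exacts [h01 _ (hfK e heK), hfH e ⟨hC.subset_ground (hlC ▸ he), heK⟩]
  have hsum : ∑ e ∈ l.support, l e • f (v e) = 0 := by
    rw [← map_zero f, ← hl0, Finsupp.linearCombination_apply, Finsupp.sum, map_sum]
    simp only [map_smul]
  rw [Finset.sum_congr rfl hterm, Finset.sum_boole, ZMod.natCast_eq_zero_iff_even] at hsum
  rw [← hlC]
  convert hsum using 1
  rw [← ncard_coe_finset, Finset.coe_filter]
  rfl

lemma two_lt_eRk_of_forall_even_ncard_inter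
    (horth : ∀ C K, M.IsCircuit C → M.IsCocircuit K → Even (C ∩ K).ncard)
    (hX : X.ncard = 4) (hXE : X ⊆ M.E) (hC3 : ∀ C ⊆ X, M.IsCircuit C → 3 ≤ C.ncard) :
    2 < M.eRk X := by
  by_contra! hr
  have hXfin := finite_of_ncard_ne_zero (by omega : X.ncard ≠ 0)
  obtain ⟨x, hxX⟩ := nonempty_of_ncard_ne_zero (by omega : X.ncard ≠ 0)
  have hx : M.IsNonloop x := isNonloop_of_not_isLoop (hXE hxX) fun hl ↦ by
    simpa using hC3 {x} (singleton_subset_iff.2 hxX) (singleton_isCircuit.2 hl)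
  obtain ⟨K, hK, hxK⟩ := hx.exists_mem_isCocircuit
  obtain ⟨y, hy, hodd⟩ := exists_odd_ncard_sdiff_singleton hXfin (by rw [hX]; decide)
    inter_subset_right ⟨x, hxK, hxX⟩
  have hT3 : (X \ {y}).ncard = 3 := by rw [ncard_sdiff_singleton_of_mem hy, hX]
  have hTfin := hXfin.subset (sdiff_subset (t := {y}))
  obtain ⟨C, hCT, hC⟩ := exists_isCircuit_subset_of_eRk_lt (sdiff_subset.trans hXE) <| by
    rw [← hTfin.cast_ncard_eq, hT3]
    exact ((M.eRk_mono sdiff_subset).trans hr).trans_lt (by norm_num)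
  obtain rfl : C = X \ {y} :=
    eq_of_subset_of_ncard_le hCT (hT3 ▸ hC3 C (hCT.trans sdiff_subset) hC) hTfin
  have hCK := horth _ K hC hK
  rw [inter_comm, ← inter_sdiff_assoc] at hCK
  exact Nat.not_even_iff_odd.2 hodd hCK

lemma isQuad_or_is4Fan_of_eRk_eq_three
    (horth : ∀ C K, M.IsCircuit C → M.IsCocircuit K → Even (C ∩ K).ncard)
    (hX : X.ncard = 4) (hXE : X ⊆ M.E) (hC3 : ∀ C ⊆ X, M.IsCircuit C → 3 ≤ C.ncard)
    (hK3 : ∀ K ⊆ X, M.IsCocircuit K → 3 ≤ K.ncard) (hr : M.eRk X = 3) (hr' : M✶.eRk X = 3) :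
    M.IsQuad X ∨ ∃ a b c d : α, X = {a, b, c, d} ∧ M.Is4FanOrdering a b c d := by
  have hXfin := finite_of_ncard_ne_zero (by omega : X.ncard ≠ 0)
  have hX4 : X.encard = 4 := by rw [← hXfin.cast_ncard_eq, hX]; rfl
  have h3 : ∀ y ∈ X, (X \ {y}).ncard = 3 := fun y hy ↦ by
    rw [ncard_sdiff_singleton_of_mem hy, hX]
  have hlt : (3 : ℕ∞) < X.encard := by rw [hX4]; norm_num
  obtain ⟨C, hCX, hC⟩ := exists_isCircuit_subset_of_eRk_lt hXE (hr ▸ hlt)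
  obtain ⟨K, hKX, hK⟩ := exists_isCircuit_subset_of_eRk_lt (M := M✶) hXE (hr' ▸ hlt)
  have hCK := horth C K hC hK
  rcases eq_or_exists_eq_sdiff_singleton hXfin hCX (by have := hC3 C hCX hC; omega)
    with rfl | ⟨d, hd, rfl⟩ <;>
  rcases eq_or_exists_eq_sdiff_singleton hXfin hKX (by have := hK3 K hKX hK; omega)
    with rfl | ⟨a, ha, rfl⟩
  · exact Or.inl ⟨isCircuit'_iff.2 hC, isCocircuit'_iff.2 hK, hX4⟩
  · rw [inter_eq_right.2 sdiff_subset, h3 a ha] at hCK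
    exact absurd hCK (by decide)
  · rw [inter_eq_left.2 sdiff_subset, h3 d hd] at hCK
    exact absurd hCK (by decide)
  obtain rfl | had := eq_or_ne a d
  · rw [inter_self, h3 a ha] at hCK
    exact absurd hCK (by decide)
  have h3' : ∀ y ∈ X, (X \ {y}).encard = 3 := fun y hy ↦ by
    rw [← (hXfin.subset sdiff_subset).cast_ncard_eq, h3 y hy]; rfl
  obtain ⟨b, c, hX', hC', hK'⟩ := exists_eq_of_ncard_eq_four hX ha hd had
  exact Or.inr ⟨a, b, c, d, hX', hX' ▸ hX4, ⟨isCircuit'_iff.2 (hC' ▸ hC), hC' ▸ h3' d hd⟩,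
    isCocircuit'_iff.2 (hK' ▸ hK), hK' ▸ h3' a ha⟩

end Matroid

open Matroid

/-- in a 3-connected binary matroid, a 4-element side of a
3-separation is a quad or a 4-fan. -/
theorem statement_4 {α : Type u} (M : Matroid α) (hMbin : M.IsBinary)
    (hM3 : M.ThreeConnected) (X Y : Set α)
    (hsep : M.IsKSep 3 X Y) (hX : X.encard = 4) :
    M.IsQuad X ∨
      ∃ a b c d : α, X = {a, b, c, d} ∧ M.Is4FanOrdering a b c d := by
  obtain ⟨ι, v, hv⟩ := hMbin
  have horth : ∀ C K, M.IsCircuit C → M.IsCocircuit K → Even (C ∩ K).ncard :=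
    fun _ _ hC hK ↦ IsRep.even_ncard_inter hv hC hK
  have horth' : ∀ C K, M✶.IsCircuit C → M✶.IsCocircuit K → Even (C ∩ K).ncard :=
    fun C K hC hK ↦ Set.inter_comm K C ▸ horth K C (dual_isCocircuit_iff.1 hK) hC
  have hXfin : X.Finite := Set.finite_of_encard_eq_coe hX
  have hX4 : X.ncard = 4 := by rw [Set.ncard_def, hX]; rfl
  have hC3 : ∀ C ⊆ X, M.IsCircuit C → 3 ≤ C.ncard := fun C hCX ↦
    hM3.three_le_ncard_of_isCircuit hsep hCX (hXfin.subset hCX)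
  have hK3 : ∀ K ⊆ X, M.IsCocircuit K → 3 ≤ K.ncard := fun K hKX ↦
    hM3.three_le_ncard_of_isCocircuit hsep hKX (hXfin.subset hKX)
  have hr := two_lt_eRk_of_forall_even_ncard_inter horth hX4 hsep.subset_ground hC3
  have hr' := two_lt_eRk_of_forall_even_ncard_inter horth' hX4 hsep.subset_ground hK3
  have hsum := hM3.eRk_add_eRk_dual_eq hsep hXfin
  rw [hX] at hsum
  obtain ⟨h3, h3'⟩ : M.eRk X = 3 ∧ M✶.eRk X = 3 := by
    generalize M.eRk X = a, M✶.eRk X = b at hsum hr hr'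
    lift a to ℕ using (by rintro rfl; norm_num at hsum)
    lift b to ℕ using (by rintro rfl; norm_num at hsum)
    norm_cast at *
    omega
  exact isQuad_or_is4Fan_of_eRk_eq_three horth hX4 hsep.subset_ground hC3 hK3 h3 h3'
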